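/- arXiv:math/0302320 — 2 statements merged into one kernel-verified Lean document; each statement's English description precedes it below -/
import Mathlib

section
/- For all integers $L \geq 0$ and $j$ with $|j| \leq L$, $\sum_{r=0,\ r\equiv j\ (\mathrm{mod}\ 2)}^{L} q^{\binom{L-r}{2}}(-q;q)_{L-r}\binom{L}{r}_{q^2}\binom{r}{(r-j)/2}_{q^2} = \binom{2L}{L-j}_q$. -/
/- Corollary of Lemma 1 of Berkovich–Warnaar (eq. (2.4)): a polynomial
identity in q.  We work in `RatFunc ℚ` with `q = RatFunc.X`. -/

open Finset

noncomputable section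

/-- The q-shifted factorial `(a; x)_n = ∏_{i=0}^{n-1} (1 - a xⁱ)`. -/
def qPoch {F : Type*} [Field F] (a x : F) (n : ℕ) : F :=
  ∏ i ∈ Finset.range n, (1 - a * x ^ i)

/-- The Gaussian binomial coefficient with base `x`, zero unless `0 ≤ k ≤ n`. -/
def qBinom {F : Type*} [Field F] (x : F) (n k : ℤ) : F :=
  if 0 ≤ k ∧ k ≤ n then
    qPoch x x n.toNat / (qPoch x x k.toNat * qPoch x x (n - k).toNat)
  else 0

def q : RatFunc ℚ := RatFunc.X

lemma hq0 : q ≠ 0 := RatFunc.X_ne_zero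

lemma hq1 : ∀ i : ℕ, 0 < i → q ^ i ≠ 1 := by
  intro i hi h
  have hX : (q : RatFunc ℚ) = algebraMap (Polynomial ℚ) (RatFunc ℚ) Polynomial.X :=
    (RatFunc.algebraMap_X).symm
  rw [hX, ← map_pow,
    show (1 : RatFunc ℚ) = algebraMap (Polynomial ℚ) (RatFunc ℚ) 1 from (map_one _).symm] at h
  have h2 := RatFunc.algebraMap_injective ℚ h
  have := congrArg Polynomial.natDegree h2
  simp [Polynomial.natDegree_X_pow] at this
  omega

lemma hQ0 : (q^2 : RatFunc ℚ) ≠ 0 := pow_ne_zero 2 hq0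

lemma hQ1 : ∀ i : ℕ, 0 < i → (q^2 : RatFunc ℚ) ^ i ≠ 1 := by
  intro i hi
  rw [← pow_mul]
  exact hq1 (2*i) (by omega)

section Generic

variable {x : RatFunc ℚ} (hx0 : x ≠ 0) (hx1 : ∀ i : ℕ, 0 < i → x ^ i ≠ 1)

lemma poch_succ (a y : RatFunc ℚ) (n : ℕ) :
    qPoch a y (n + 1) = qPoch a y n * (1 - a * y ^ n) := Finset.prod_range_succ _ n

lemma poch_zero (a y : RatFunc ℚ) : qPoch a y 0 = 1 := Finset.prod_range_zero _

include hx1 in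
lemma fac_ne (i : ℕ) : (1 : RatFunc ℚ) - x * x ^ i ≠ 0 := by
  rw [sub_ne_zero, ← pow_succ']
  exact fun h => hx1 (i+1) (Nat.succ_pos i) h.symm

include hx1 in
lemma poch_ne (n : ℕ) : qPoch x x n ≠ 0 := by
  induction n with
  | zero => simp [poch_zero]
  | succ n ih => rw [poch_succ]; exact mul_ne_zero ih (fac_ne hx1 n)

lemma qBinom_eq_of_le (n k : ℕ) (h : k ≤ n) :
    qBinom x (n : ℤ) (k : ℤ) = qPoch x x n / (qPoch x x k * qPoch x x (n - k)) := by
  unfold qBinom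
  rw [if_pos ⟨Int.natCast_nonneg k, by exact_mod_cast h⟩,
    show ((n:ℤ)).toNat = n by omega, show ((k:ℤ)).toNat = k by omega,
    show ((n:ℤ) - (k:ℤ)).toNat = n - k by omega]

lemma qBinom_neg {n k : ℤ} (hk : k < 0) : qBinom x n k = 0 := if_neg (by omega)

lemma qBinom_gt {n k : ℤ} (h : n < k) : qBinom x n k = 0 := if_neg (by omega)

include hx1 in
lemma qBinom_zero (n : ℕ) : qBinom x (n : ℤ) 0 = 1 := by
  rw [show (0:ℤ) = ((0:ℕ):ℤ) from rfl, qBinom_eq_of_le n 0 (Nat.zero_le n)]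
  simp [poch_zero, div_self (poch_ne hx1 n)]

include hx1 in
lemma qBinom_self (n : ℕ) : qBinom x (n : ℤ) (n : ℤ) = 1 := by
  rw [qBinom_eq_of_le n n le_rfl]
  simp [poch_zero, div_self (poch_ne hx1 n)]

end Generic

section Generic2

variable {x : RatFunc ℚ} (hx0 : x ≠ 0) (hx1 : ∀ i : ℕ, 0 < i → x ^ i ≠ 1)

include hx1 in
lemma pascal1 (n : ℕ) (k : ℤ) :
    qBinom x ((n : ℤ) + 1) k
      = qBinom x n k + x ^ ((n : ℤ) + 1 - k) * qBinom x n (k - 1) := by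
  rcases lt_or_ge k 0 with hk | hk
  · rw [qBinom_neg hk, qBinom_neg hk, qBinom_neg (by omega : k - 1 < 0)]; ring
  rcases lt_or_ge ((n : ℤ) + 1) k with hk2 | hk2
  · rw [qBinom_gt hk2, qBinom_gt (by omega : (n:ℤ) < k), qBinom_gt (by omega : (n:ℤ) < k - 1)]
    ring
  rcases eq_or_lt_of_le hk2 with hk3 | hk3
  · subst hk3
    rw [show (n:ℤ)+1 = ((n+1:ℕ):ℤ) by push_cast; ring, qBinom_self hx1,
      qBinom_gt (by push_cast; omega : (n:ℤ) < ((n+1:ℕ):ℤ)),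
      show ((n+1:ℕ):ℤ) - 1 = (n:ℤ) by push_cast; ring, qBinom_self hx1]
    simp
  -- now 0 ≤ k ≤ n
  obtain ⟨a, rfl⟩ : ∃ a : ℕ, k = (a : ℤ) := ⟨k.toNat, by omega⟩
  rcases Nat.eq_zero_or_pos a with rfl | ha
  · rw [show ((0:ℕ):ℤ) = (0:ℤ) by norm_num, show (n:ℤ)+1 = ((n+1:ℕ):ℤ) by push_cast; ring,
      qBinom_zero hx1, qBinom_zero hx1, qBinom_neg (by omega : (0:ℤ) - 1 < 0)]
    ring
  obtain ⟨b, rfl⟩ : ∃ b : ℕ, a = b + 1 := ⟨a - 1, by omega⟩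
  obtain ⟨c, rfl⟩ : ∃ c : ℕ, n = (b + 1) + c := ⟨n - (b+1), by omega⟩
  rw [show ((b+1+c:ℕ):ℤ) + 1 = ((b+1+c+1:ℕ):ℤ) by push_cast; ring,
    show ((b+1:ℕ):ℤ) - 1 = ((b:ℕ):ℤ) by push_cast; ring,
    show ((b+1+c+1:ℕ):ℤ) - ((b+1:ℕ):ℤ) = ((c+1:ℕ):ℤ) by push_cast; ring,
    zpow_natCast,
    qBinom_eq_of_le (b+1+c+1) (b+1) (by omega),
    qBinom_eq_of_le (b+1+c) (b+1) (by omega),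
    qBinom_eq_of_le (b+1+c) b (by omega),
    show b+1+c+1 - (b+1) = c+1 by omega,
    show b+1+c - (b+1) = c by omega,
    show b+1+c - b = c+1 by omega,
    show b+1+c+1 = (b+1+c)+1 by omega,
    poch_succ, poch_succ, poch_succ]
  have hP := poch_ne hx1 (b+1+c)
  have hPb := poch_ne hx1 b
  have hPc := poch_ne hx1 c
  have f1 := fac_ne hx1 b
  have f2 := fac_ne hx1 c
  have f3 := fac_ne hx1 (b+1+c)
  field_simp
  ring

include hx1 in
lemma pascal2 (n : ℕ) (k : ℤ) :
    qBinom x ((n : ℤ) + 1) k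
      = qBinom x n (k - 1) + x ^ k * qBinom x n k := by
  rcases lt_or_ge k 0 with hk | hk
  · rw [qBinom_neg hk, qBinom_neg hk, qBinom_neg (by omega : k - 1 < 0)]; ring
  rcases lt_or_ge ((n : ℤ) + 1) k with hk2 | hk2
  · rw [qBinom_gt hk2, qBinom_gt (by omega : (n:ℤ) < k), qBinom_gt (by omega : (n:ℤ) < k - 1)]
    ring
  rcases eq_or_lt_of_le hk2 with hk3 | hk3
  · subst hk3
    rw [show (n:ℤ)+1 = ((n+1:ℕ):ℤ) by push_cast; ring, qBinom_self hx1,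
      qBinom_gt (by push_cast; omega : (n:ℤ) < ((n+1:ℕ):ℤ)),
      show ((n+1:ℕ):ℤ) - 1 = (n:ℤ) by push_cast; ring, qBinom_self hx1]
    simp
  obtain ⟨a, rfl⟩ : ∃ a : ℕ, k = (a : ℤ) := ⟨k.toNat, by omega⟩
  rcases Nat.eq_zero_or_pos a with rfl | ha
  · rw [show ((0:ℕ):ℤ) = (0:ℤ) by norm_num, show (n:ℤ)+1 = ((n+1:ℕ):ℤ) by push_cast; ring,
      qBinom_zero hx1, qBinom_zero hx1, qBinom_neg (by omega : (0:ℤ) - 1 < 0)]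
    simp
  obtain ⟨b, rfl⟩ : ∃ b : ℕ, a = b + 1 := ⟨a - 1, by omega⟩
  obtain ⟨c, rfl⟩ : ∃ c : ℕ, n = (b + 1) + c := ⟨n - (b+1), by omega⟩
  rw [show ((b+1+c:ℕ):ℤ) + 1 = ((b+1+c+1:ℕ):ℤ) by push_cast; ring,
    show ((b+1:ℕ):ℤ) - 1 = ((b:ℕ):ℤ) by push_cast; ring,
    zpow_natCast,
    qBinom_eq_of_le (b+1+c+1) (b+1) (by omega),
    qBinom_eq_of_le (b+1+c) (b+1) (by omega),
    qBinom_eq_of_le (b+1+c) b (by omega),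
    show b+1+c+1 - (b+1) = c+1 by omega,
    show b+1+c - (b+1) = c by omega,
    show b+1+c - b = c+1 by omega,
    show b+1+c+1 = (b+1+c)+1 by omega,
    poch_succ, poch_succ, poch_succ]
  have hP := poch_ne hx1 (b+1+c)
  have hPb := poch_ne hx1 b
  have hPc := poch_ne hx1 c
  have f1 := fac_ne hx1 b
  have f2 := fac_ne hx1 c
  have f3 := fac_ne hx1 (b+1+c)
  field_simp
  ring

include hx1 in
lemma contig (n : ℕ) (k : ℤ) :
    (1 - x ^ k) * qBinom x n k
      = (1 - x ^ ((n : ℤ) - k + 1)) * qBinom x n (k - 1) := by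
  rcases lt_or_ge k 0 with hk | hk
  · rw [qBinom_neg hk, qBinom_neg (by omega : k - 1 < 0)]; ring
  rcases eq_or_lt_of_le hk with rfl | hk1
  · rw [qBinom_neg (by omega : (0:ℤ) - 1 < 0)]; simp
  rcases lt_or_ge (n : ℤ) k with hk2 | hk2
  · rcases eq_or_lt_of_le (by omega : (n:ℤ) + 1 ≤ k) with hk3 | hk3
    · rw [qBinom_gt hk2, show (n:ℤ) - k + 1 = 0 by omega, zpow_zero]; simp
    · rw [qBinom_gt hk2, qBinom_gt (by omega : (n:ℤ) < k - 1)]; ring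
  -- 1 ≤ k ≤ n
  obtain ⟨a, rfl⟩ : ∃ a : ℕ, k = (a : ℤ) := ⟨k.toNat, by omega⟩
  obtain ⟨b, rfl⟩ : ∃ b : ℕ, a = b + 1 := ⟨a - 1, by omega⟩
  obtain ⟨c, rfl⟩ : ∃ c : ℕ, n = (b + 1) + c := ⟨n - (b+1), by omega⟩
  rw [show ((b+1:ℕ):ℤ) - 1 = ((b:ℕ):ℤ) by push_cast; ring,
    show ((b+1+c:ℕ):ℤ) - ((b+1:ℕ):ℤ) + 1 = ((c+1:ℕ):ℤ) by push_cast; ring,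
    zpow_natCast, zpow_natCast,
    qBinom_eq_of_le (b+1+c) (b+1) (by omega),
    qBinom_eq_of_le (b+1+c) b (by omega),
    show b+1+c - (b+1) = c by omega,
    show b+1+c - b = c+1 by omega,
    poch_succ, poch_succ]
  have hP := poch_ne hx1 (b+1+c)
  have hPb := poch_ne hx1 b
  have hPc := poch_ne hx1 c
  have f1 := fac_ne hx1 b
  have f2 := fac_ne hx1 c
  field_simp
  ring

end Generic2

-- zpow helpers
lemma qmono (j a : ℤ) (n k m : ℕ) (h : a = (n : ℤ) + (k : ℤ) * j + (m : ℤ)) :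
    q ^ a = q ^ n * (q ^ j) ^ k * q ^ m := by
  subst h
  rw [← zpow_natCast q n, ← zpow_natCast q m, ← zpow_natCast (q ^ j) k, ← zpow_mul,
    ← zpow_add₀ hq0, ← zpow_add₀ hq0]
  congr 1
  ring

lemma Qmono (j a : ℤ) (s : ℕ) (h : 2 * a = (j : ℤ) + 1 + (s : ℤ)) :
    ((q ^ 2 : RatFunc ℚ)) ^ a = q ^ j * q * q ^ s := by
  have h2 : ((q^2 : RatFunc ℚ)) ^ a = q ^ (2 * a) := by
    rw [← zpow_natCast q 2, ← zpow_mul]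
    norm_num
  rw [h2, h, zpow_add₀ hq0, zpow_add_one₀ hq0, zpow_natCast]

-- The families
def Aw (L r : ℕ) : RatFunc ℚ := q ^ ((L - r).choose 2) * qPoch (-q) q (L - r)

def Tt (L : ℕ) (j : ℤ) (r : ℕ) : RatFunc ℚ :=
  if (r : ℤ) % 2 = j % 2 then
    Aw L r * qBinom (q ^ 2) (L : ℤ) (r : ℤ) * qBinom (q ^ 2) (r : ℤ) (((r : ℤ) - j) / 2)
  else 0

def Sb (L : ℕ) (j : ℤ) : RatFunc ℚ := ∑ r ∈ Finset.range (L + 1), Tt L j r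

def Vt (L : ℕ) (j : ℤ) (r : ℕ) : RatFunc ℚ :=
  if (r : ℤ) % 2 = j % 2 then
    Aw L r * q ^ r * qBinom (q ^ 2) (L : ℤ) (r : ℤ) * qBinom (q ^ 2) (r : ℤ) (((r : ℤ) - j) / 2)
  else 0

def Vb (L : ℕ) (j : ℤ) : RatFunc ℚ := ∑ r ∈ Finset.range (L + 1), Vt L j r

-- vanishing
lemma Tt_vanish {L : ℕ} {j : ℤ} {r : ℕ} (h : (r : ℤ) < j) : Tt L j r = 0 := by
  unfold Tt
  split_ifs with hp
  · rw [qBinom_neg (by omega : ((r : ℤ) - j) / 2 < 0)]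
    ring
  · rfl

lemma Vt_vanish {L : ℕ} {j : ℤ} {r : ℕ} (h : (r : ℤ) < j) : Vt L j r = 0 := by
  unfold Vt
  split_ifs with hp
  · rw [qBinom_neg (by omega : ((r : ℤ) - j) / 2 < 0)]
    ring
  · rfl

lemma Sb_vanish {L : ℕ} {j : ℤ} (h : (L : ℤ) < j) : Sb L j = 0 :=
  Finset.sum_eq_zero fun r hr => Tt_vanish (by simp [Finset.mem_range] at hr; omega)

lemma Vb_vanish {L : ℕ} {j : ℤ} (h : (L : ℤ) < j) : Vb L j = 0 :=
  Finset.sum_eq_zero fun r hr => Vt_vanish (by simp [Finset.mem_range] at hr; omega)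

lemma Vb_top (L : ℕ) : Vb L L = q ^ L := by
  unfold Vb
  rw [Finset.sum_eq_single_of_mem L (Finset.self_mem_range_succ L)]
  · unfold Vt
    rw [if_pos rfl, show ((L:ℤ) - (L:ℤ))/2 = (0:ℤ) by omega]
    unfold Aw
    rw [Nat.sub_self, qBinom_self hQ1, qBinom_zero hQ1, poch_zero]
    norm_num
  · intro r hr hne
    exact Vt_vanish (by simp [Finset.mem_range] at hr; omega)

lemma qwz (j a : ℤ) (k s : ℕ) (h : j + 2*a = (k:ℤ)*j + (s:ℤ)) :
    q ^ j * ((q^2 : RatFunc ℚ)) ^ a = (q ^ j) ^ k * q ^ s := by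
  have h2 : ((q^2 : RatFunc ℚ)) ^ a = q ^ (2*a) := by
    rw [← zpow_natCast q 2, ← zpow_mul]; norm_num
  rw [h2, ← zpow_add₀ hq0, qmono j (j+2*a) 0 k s (by push_cast; omega)]
  simp

lemma Vshift (L : ℕ) (j : ℤ) :
    Vb L j = q ^ j * (Sb L j - Sb L (j+2)) + (q ^ j) ^ 2 * q ^ 2 * Vb L (j+2) := by
  unfold Vb Sb
  rw [← Finset.sum_sub_distrib, Finset.mul_sum, Finset.mul_sum, ← Finset.sum_add_distrib]
  refine Finset.sum_congr rfl fun r _ => ?_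
  unfold Vt Tt
  by_cases hp : (r : ℤ) % 2 = j % 2
  · rw [if_pos hp, if_pos hp, if_pos (by omega : (r:ℤ) % 2 = (j+2) % 2),
      if_pos (by omega : (r:ℤ) % 2 = (j+2) % 2),
      show ((r:ℤ) - (j+2)) / 2 = ((r:ℤ) - j) / 2 - 1 by omega]
    have hm : 2 * (((r:ℤ) - j) / 2) = (r:ℤ) - j := by omega
    have hc := contig hQ1 r (((r:ℤ) - j) / 2)
    have eA : q ^ j * ((q^2 : RatFunc ℚ)) ^ (((r:ℤ) - j) / 2) = (q ^ j) ^ 0 * q ^ r :=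
      qwz j _ 0 r (by omega)
    have eB : q ^ j * ((q^2 : RatFunc ℚ)) ^ ((r:ℤ) - ((r:ℤ) - j) / 2 + 1)
        = (q ^ j) ^ 2 * q ^ (r + 2) := qwz j _ 2 (r+2) (by push_cast; omega)
    rw [pow_zero, one_mul] at eA
    linear_combination
      (-(Aw L r * qBinom (q^2) (L:ℤ) (r:ℤ) * q ^ j)) * hc
      + (-(Aw L r * qBinom (q^2) (L:ℤ) (r:ℤ) * qBinom (q^2) (r:ℤ) (((r:ℤ) - j) / 2))) * eA
      + (Aw L r * qBinom (q^2) (L:ℤ) (r:ℤ) * qBinom (q^2) (r:ℤ) (((r:ℤ) - j) / 2 - 1)) * eB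
  · rw [if_neg hp, if_neg hp, if_neg (by omega : ¬ (r:ℤ) % 2 = (j+2) % 2),
      if_neg (by omega : ¬ (r:ℤ) % 2 = (j+2) % 2)]
    ring

lemma qmm (j a : ℤ) (k t n k' m : ℕ) (h : (k:ℤ)*j + t + a = (n:ℤ) + (k':ℤ)*j + m) :
    (q^j)^k * q^t * q^a = q^n * (q^j)^k' * q^m := by
  rw [← zpow_natCast (q^j) k, ← zpow_mul, ← zpow_natCast q t, ← zpow_add₀ hq0,
    ← zpow_add₀ hq0, qmono j _ n k' m (by linear_combination h)]

lemma phi (L : ℕ) (HS : ∀ i : ℤ, Sb L i = qBinom q ((2*L:ℕ):ℤ) ((L:ℤ) - i)) :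
    ∀ (n : ℕ) (j : ℤ), ((L:ℤ) - j).toNat ≤ n →
      q ^ j * q * Vb L (j+1) + q ^ L * Vb L j
        = q ^ L * q ^ j * qBinom q ((2*L:ℕ):ℤ) ((L:ℤ) - j)
          + q ^ L * q ^ j * q * qBinom q ((2*L:ℕ):ℤ) ((L:ℤ) - j - 1) := by
  have base : ∀ j : ℤ, (L:ℤ) ≤ j →
      q ^ j * q * Vb L (j+1) + q ^ L * Vb L j
        = q ^ L * q ^ j * qBinom q ((2*L:ℕ):ℤ) ((L:ℤ) - j)
          + q ^ L * q ^ j * q * qBinom q ((2*L:ℕ):ℤ) ((L:ℤ) - j - 1) := by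
    intro j hj
    rcases eq_or_lt_of_le hj with rfl | hj2
    · rw [Vb_vanish (by omega), Vb_top, zpow_natCast,
        show (L:ℤ) - (L:ℤ) = 0 by ring, qBinom_zero hq1,
        qBinom_neg (by omega : (0:ℤ) - 1 < 0)]
      ring
    · rw [Vb_vanish (by omega), Vb_vanish (by omega),
        qBinom_neg (by omega : (L:ℤ) - j < 0), qBinom_neg (by omega : (L:ℤ) - j - 1 < 0)]
      ring
  intro n
  induction n with
  | zero => exact fun j hj => base j (by omega)
  | succ n ih =>
    intro j hj
    by_cases hjL : (L:ℤ) ≤ j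
    · exact base j hjL
    push_neg at hjL
    have H2 := ih (j+2) (by omega)
    have e1 := Vshift L j
    have e2 := Vshift L (j+1)
    rw [HS j, HS (j+2), show (L:ℤ) - (j+2) = (L:ℤ) - j - 2 by ring] at e1
    rw [HS (j+1), HS (j+1+2), show (L:ℤ) - (j+1) = (L:ℤ) - j - 1 by ring,
      show (L:ℤ) - (j+1+2) = (L:ℤ) - j - 3 by ring,
      show q^(j+1) = q^j*q from by rw [zpow_add_one₀ hq0]] at e2
    rw [show (L:ℤ) - (j+2) = (L:ℤ) - j - 2 by ring,
      show (L:ℤ) - j - 2 - 1 = (L:ℤ) - j - 3 by ring,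
      show j+2+1 = j+1+2 by ring,
      show q^(j+2) = q^j*q*q from by
        rw [show j+2 = j+1+1 by ring, zpow_add_one₀ hq0, zpow_add_one₀ hq0]] at H2
    -- contiguous relations
    have hc1 := contig hq1 (2*L) ((L:ℤ)-j-1)
    have hc2 := contig hq1 (2*L) ((L:ℤ)-j-2)
    rw [show (L:ℤ)-j-1-1 = (L:ℤ)-j-2 by ring] at hc1
    rw [show (L:ℤ)-j-2-1 = (L:ℤ)-j-3 by ring] at hc2
    have mA : (q^j)^1 * q^1 * q^((L:ℤ)-j-1) = q^L * (q^j)^0 * q^0 :=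
      qmm j _ 1 1 L 0 0 (by push_cast; ring)
    have mB : (q^j)^1 * q^1 * q^(((2*L:ℕ):ℤ) - ((L:ℤ)-j-1) + 1) = q^L * (q^j)^2 * q^3 :=
      qmm j _ 1 1 L 2 3 (by push_cast; ring)
    have mC : (q^j)^1 * q^2 * q^((L:ℤ)-j-2) = q^L * (q^j)^0 * q^0 :=
      qmm j _ 1 2 L 0 0 (by push_cast; ring)
    have mD : (q^j)^1 * q^2 * q^(((2*L:ℕ):ℤ) - ((L:ℤ)-j-2) + 1) = q^L * (q^j)^2 * q^5 :=
      qmm j _ 1 2 L 2 5 (by push_cast; ring)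
    have c1p : (q^j*q - q^L) * qBinom q ((2*L:ℕ):ℤ) ((L:ℤ)-j-1)
        = (q^j*q - q^L*(q^j)^2*q^3) * qBinom q ((2*L:ℕ):ℤ) ((L:ℤ)-j-2) := by
      linear_combination (q^j*q) * hc1
        + qBinom q ((2*L:ℕ):ℤ) ((L:ℤ)-j-1) * mA
        - qBinom q ((2*L:ℕ):ℤ) ((L:ℤ)-j-2) * mB
    have c2p : (q^j*q^2 - q^L) * qBinom q ((2*L:ℕ):ℤ) ((L:ℤ)-j-2)
        = (q^j*q^2 - q^L*(q^j)^2*q^5) * qBinom q ((2*L:ℕ):ℤ) ((L:ℤ)-j-3) := by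
      linear_combination (q^j*q^2) * hc2
        + qBinom q ((2*L:ℕ):ℤ) ((L:ℤ)-j-2) * mC
        - qBinom q ((2*L:ℕ):ℤ) ((L:ℤ)-j-3) * mD
    linear_combination (q^L) * e1 + (q^j*q) * e2 + ((q^j)^2*q^2) * H2
      + (q^j*q) * c1p + (q^j) * c2p

lemma A_succ (L r : ℕ) (h : r ≤ L) :
    Aw (L+1) r * ((q^2 : RatFunc ℚ))^r = (q^(L+r) + q^(2*L+1)) * Aw L r := by
  obtain ⟨n, rfl⟩ : ∃ n, L = r + n := ⟨L - r, by omega⟩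
  unfold Aw
  rw [show r+n+1-r = n+1 by omega, show r+n-r = n by omega,
    Nat.choose_succ_succ, Nat.choose_one_right, poch_succ]
  ring

lemma C1 (L : ℕ) (j : ℤ) :
    Sb (L+1) j = Sb L (j-1) + q^j*q * Vb L (j+1) + q^L * Vb L j + q^(2*L+1) * Sb L j := by
  have hsplit : ∀ r ∈ Finset.range (L+2), Tt (L+1) j r =
      (if (r : ℤ) % 2 = j % 2 then
        Aw (L+1) r * qBinom (q^2) (L:ℤ) ((r:ℤ)-1) * qBinom (q^2) (r:ℤ) (((r:ℤ)-j)/2)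
      else 0)
      + (if (r : ℤ) % 2 = j % 2 then
        Aw (L+1) r * ((q^2 : RatFunc ℚ))^r * qBinom (q^2) (L:ℤ) (r:ℤ) *
          qBinom (q^2) (r:ℤ) (((r:ℤ)-j)/2)
      else 0) := by
    intro r _
    unfold Tt
    rw [show (((L+1:ℕ)):ℤ) = (L:ℤ)+1 by push_cast; ring, pascal2 hQ1 L (r:ℤ),
      zpow_natCast]
    split_ifs
    · ring
    · ring
  rw [show Sb (L+1) j = ∑ r ∈ Finset.range (L+2), Tt (L+1) j r from rfl,
    Finset.sum_congr rfl hsplit, Finset.sum_add_distrib]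
  -- Y part
  have hY : (∑ r ∈ Finset.range (L+2),
      (if (r : ℤ) % 2 = j % 2 then
        Aw (L+1) r * ((q^2 : RatFunc ℚ))^r * qBinom (q^2) (L:ℤ) (r:ℤ) *
          qBinom (q^2) (r:ℤ) (((r:ℤ)-j)/2)
      else 0)) = q^L * Vb L j + q^(2*L+1) * Sb L j := by
    rw [Finset.sum_range_succ]
    have hlast : (if ((L+1:ℕ) : ℤ) % 2 = j % 2 then
        Aw (L+1) (L+1) * ((q^2 : RatFunc ℚ))^(L+1) * qBinom (q^2) (L:ℤ) ((L+1:ℕ):ℤ) *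
          qBinom (q^2) ((L+1:ℕ):ℤ) ((((L+1:ℕ):ℤ)-j)/2)
      else 0) = 0 := by
      split_ifs
      · rw [qBinom_gt (by push_cast; omega : (L:ℤ) < ((L+1:ℕ):ℤ))]; ring
      · rfl
    rw [hlast, add_zero, Vb, Sb, Finset.mul_sum, Finset.mul_sum, ← Finset.sum_add_distrib]
    refine Finset.sum_congr rfl fun r hr => ?_
    have hr' : r ≤ L := by simp [Finset.mem_range] at hr; omega
    unfold Vt Tt
    split_ifs
    · linear_combination
        (qBinom (q^2) (L:ℤ) (r:ℤ) * qBinom (q^2) (r:ℤ) (((r:ℤ)-j)/2)) * A_succ L r hr'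
    · ring
  rw [hY]
  -- X part
  have hX : (∑ r ∈ Finset.range (L+2),
      (if (r : ℤ) % 2 = j % 2 then
        Aw (L+1) r * qBinom (q^2) (L:ℤ) ((r:ℤ)-1) * qBinom (q^2) (r:ℤ) (((r:ℤ)-j)/2)
      else 0)) = Sb L (j-1) + q^j*q * Vb L (j+1) := by
    rw [Finset.sum_range_succ']
    have h0 : (if ((0:ℕ) : ℤ) % 2 = j % 2 then
        Aw (L+1) 0 * qBinom (q^2) (L:ℤ) (((0:ℕ):ℤ)-1) * qBinom (q^2) ((0:ℕ):ℤ) ((((0:ℕ):ℤ)-j)/2)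
      else 0) = 0 := by
      split_ifs
      · rw [qBinom_neg (by omega : ((0:ℕ):ℤ)-1 < 0)]; ring
      · rfl
    rw [h0, add_zero, Sb, Vb, Finset.mul_sum, ← Finset.sum_add_distrib]
    refine Finset.sum_congr rfl fun s _ => ?_
    have hA : Aw (L+1) (s+1) = Aw L s := by
      unfold Aw; rw [show L+1-(s+1) = L - s by omega]
    unfold Tt Vt
    push_cast
    by_cases hp : ((s:ℤ)+1) % 2 = j % 2
    · rw [if_pos hp, if_pos (by omega : (s:ℤ) % 2 = (j-1) % 2),
        if_pos (by omega : (s:ℤ) % 2 = (j+1) % 2), hA,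
        show (s:ℤ)+1-1 = (s:ℤ) by ring,
        pascal1 hQ1 s (((s:ℤ)+1-j)/2),
        Qmono j ((s:ℤ)+1-((s:ℤ)+1-j)/2) s (by omega),
        show ((s:ℤ)+1-j)/2 = ((s:ℤ)-(j-1))/2 by omega,
        show ((s:ℤ)-(j-1))/2 - 1 = ((s:ℤ)-(j+1))/2 by omega]
      ring
    · rw [if_neg hp, if_neg (by omega : ¬ (s:ℤ) % 2 = (j-1) % 2),
        if_neg (by omega : ¬ (s:ℤ) % 2 = (j+1) % 2)]
      ring
  rw [hX]
  ring

lemma rhs_rec (L : ℕ) (j : ℤ) :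
    qBinom q ((2*(L+1):ℕ):ℤ) ((L:ℤ)+1-j)
      = qBinom q ((2*L:ℕ):ℤ) ((L:ℤ)-j+1)
        + (q^L*q^j + q^(2*L+1)) * qBinom q ((2*L:ℕ):ℤ) ((L:ℤ)-j)
        + q^L*q^j*q * qBinom q ((2*L:ℕ):ℤ) ((L:ℤ)-j-1) := by
  have p1 := pascal1 hq1 (2*L+1) ((L:ℤ)+1-j)
  rw [show ((2*L+1:ℕ):ℤ) = ((2*L:ℕ):ℤ)+1 by push_cast; ring,
    show (L:ℤ)+1-j-1 = (L:ℤ)-j by ring,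
    qmono j (((2*L:ℕ):ℤ)+1+1-((L:ℤ)+1-j)) L 1 1 (by push_cast; ring),
    show (L:ℤ)+1-j = (L:ℤ)-j+1 by ring] at p1
  have p2 := pascal1 hq1 (2*L) ((L:ℤ)+1-j)
  rw [show (L:ℤ)+1-j-1 = (L:ℤ)-j by ring,
    show (L:ℤ)+1-j = (L:ℤ)-j+1 by ring,
    qmono j (((2*L:ℕ):ℤ)+1-((L:ℤ)-j+1)) L 1 0 (by push_cast; ring)] at p2
  have p3 := pascal1 hq1 (2*L) ((L:ℤ)-j)
  rw [qmono j (((2*L:ℕ):ℤ)+1-((L:ℤ)-j)) L 1 1 (by push_cast; ring)] at p3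
  have hc := contig hq1 (2*L) ((L:ℤ)-j)
  have m4 : (q^j)^1 * q^0 * q^((L:ℤ)-j) = q^L * (q^j)^0 * q^0 :=
    qmm j _ 1 0 L 0 0 (by push_cast; ring)
  have m5 : (q^j)^1 * q^0 * q^(((2*L:ℕ):ℤ) - ((L:ℤ)-j) + 1) = q^L * (q^j)^2 * q^1 :=
    qmm j _ 1 0 L 2 1 (by push_cast; ring)
  have c3p : (q^j - q^L) * qBinom q ((2*L:ℕ):ℤ) ((L:ℤ)-j)
      = (q^j - q^L*(q^j)^2*q) * qBinom q ((2*L:ℕ):ℤ) ((L:ℤ)-j-1) := by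
    linear_combination (q^j) * hc
      + qBinom q ((2*L:ℕ):ℤ) ((L:ℤ)-j) * m4
      - qBinom q ((2*L:ℕ):ℤ) ((L:ℤ)-j-1) * m5
  rw [show ((2*(L+1):ℕ):ℤ) = ((2*L:ℕ):ℤ)+1+1 by push_cast; ring,
    show (L:ℤ)+1-j = (L:ℤ)-j+1 by ring]
  linear_combination p1 + p2 + (q^L*(q^j)^1*q^1) * p3 + (q^L*q) * c3p

theorem main_aux : ∀ L : ℕ, ∀ j : ℤ, Sb L j = qBinom q ((2*L:ℕ):ℤ) ((L:ℤ) - j) := by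
  intro L
  induction L with
  | zero =>
    intro j
    rw [show Sb 0 j = Tt 0 j 0 from by rw [Sb, Finset.sum_range_one]]
    unfold Tt Aw
    have h00Q : qBinom (q^2 : RatFunc ℚ) ((0:ℕ):ℤ) ((0:ℕ):ℤ) = 1 := qBinom_self hQ1 0
    have h00q : qBinom q ((0:ℕ):ℤ) ((0:ℕ):ℤ) = 1 := qBinom_self hq1 0
    by_cases hp : ((0:ℕ):ℤ) % 2 = j % 2
    · rw [if_pos hp]
      rcases lt_trichotomy j 0 with hj | rfl | hj
      · rw [qBinom_gt (by omega : ((0:ℕ):ℤ) < (((0:ℕ):ℤ)-j)/2),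
          qBinom_gt (by push_cast; omega : ((2*0:ℕ):ℤ) < ((0:ℕ):ℤ)-j)]
        ring
      · rw [show (((0:ℕ):ℤ) - 0)/2 = ((0:ℕ):ℤ) by norm_num, h00Q,
          show ((2*0:ℕ):ℤ) = ((0:ℕ):ℤ) by norm_num,
          show ((0:ℕ):ℤ) - 0 = ((0:ℕ):ℤ) by norm_num, h00q]
        norm_num [poch_zero]
      · rw [qBinom_neg (by omega : (((0:ℕ):ℤ)-j)/2 < 0),
          qBinom_neg (by push_cast; omega : ((0:ℕ):ℤ)-j < 0)]
        ring
    · rw [if_neg hp]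
      have hj : j ≠ 0 := by intro h; apply hp; omega
      rcases lt_trichotomy j 0 with hjl | rfl | hjl
      · rw [qBinom_gt (by push_cast; omega : ((2*0:ℕ):ℤ) < ((0:ℕ):ℤ)-j)]
      · omega
      · rw [qBinom_neg (by omega : ((0:ℕ):ℤ)-j < 0)]
  | succ L ih =>
    intro j
    have hphi := phi L ih (((L:ℤ) - j).toNat) j le_rfl
    have i1 := ih (j-1)
    rw [show (L:ℤ) - (j-1) = (L:ℤ)-j+1 by ring] at i1
    rw [show ((L+1:ℕ):ℤ) - j = (L:ℤ)+1-j by push_cast; ring]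
    linear_combination C1 L j + hphi + i1 + q^(2*L+1) * ih j - rhs_rec L j

theorem stmt1 (L : ℕ) (j : ℤ) (hj : |j| ≤ (L : ℤ)) :
    ∑ r ∈ Finset.range (L + 1),
      (if (r : ℤ) % 2 = j % 2 then
        q ^ ((L - r).choose 2) * qPoch (-q) q (L - r) *
          qBinom (q ^ 2) (L : ℤ) (r : ℤ) *
          qBinom (q ^ 2) (r : ℤ) (((r : ℤ) - j) / 2)
      else 0)
    = qBinom q (2 * L : ℤ) ((L : ℤ) - j) := by
  have h := main_aux L j
  rw [show ((2*L:ℕ):ℤ) = (2*L:ℤ) by push_cast; ring] at h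
  exact h

end
end

section
/- For all integers $n \geq 0$ and $j$: $\sum_{k=0}^{\lfloor j/2 \rfloor} q^{\binom{j-2k}{2}} (-q;q)_{j-2k} \binom{n-k}{j-2k}_{q^2} \binom{n}{k}_{q^2} = \binom{2n}{j}_q$, a polynomial identity in $q$. -/
/- Identity (8.5) of Berkovich–Warnaar:
`∑_{k=0}^{⌊j/2⌋} q^{C(j-2k,2)} (-q;q)_{j-2k} [n-k, j-2k]_{q²} [n,k]_{q²} = [2n, j]_q`,
a polynomial identity in q, stated in `RatFunc ℚ` with `q = RatFunc.X`. -/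

open Finset

noncomputable section

/-! With `m = j - 2k`, the summand equals
`(q²;q²)_n · q^C(m,2) / ((q;q)_m (q²;q²)_k (q²;q²)_{n-k-m})`. Reading `1/(x;x)_m` as `0` for
`m < 0`, this summand `F j k` satisfies, for all integers `j, k`, the telescoping relation
`(1 - q^j) F j k - (1 - q^(2n+1-j)) F (j-1) k = G (k+1) - G k` with `G k = (q^j - q^(j-2k)) F j k`,
and `G 0 = 0`. Summing over `k`, the left side of the identity satisfies the first-order recurrence
`(1 - q^j) S j = (1 - q^(2n+1-j)) S (j-1)` of `[2n, j]_q`, and both sides are `1` at `j = 0`. -/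

lemma Transcendental.not_isOfFinOrder {R A : Type*} [CommRing R] [Nontrivial R] [CommRing A]
    [Algebra R A] {a : A} (ha : Transcendental R a) : ¬IsOfFinOrder a := by
  rintro h
  obtain ⟨i, hi, hai⟩ := isOfFinOrder_iff_pow_eq_one.1 h
  exact ha ⟨Polynomial.X ^ i - Polynomial.C 1, Polynomial.X_pow_sub_C_ne_zero hi 1, by simp [hai]⟩

variable {K : Type*} [Field K]

lemma qPoch_succ (a x : K) (m : ℕ) : qPoch a x (m + 1) = qPoch a x m * (1 - a * x ^ m) :=
  prod_range_succ _ _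

lemma one_sub_pow_ne_zero {x : K} (hx : ¬IsOfFinOrder x) {i : ℕ} (hi : i ≠ 0) : 1 - x ^ i ≠ 0 :=
  fun h => hx (isOfFinOrder_iff_pow_eq_one.2 ⟨i, Nat.pos_of_ne_zero hi, (sub_eq_zero.1 h).symm⟩)

lemma qPoch_self_ne_zero {x : K} (hx : ¬IsOfFinOrder x) (m : ℕ) : qPoch x x m ≠ 0 :=
  prod_ne_zero_iff.2 fun i _ => by rw [← pow_succ']; exact one_sub_pow_ne_zero hx i.succ_ne_zero

lemma qPoch_mul_qPoch_neg (x : K) (m : ℕ) :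
    qPoch x x m * qPoch (-x) x m = qPoch (x ^ 2) (x ^ 2) m := by
  rw [qPoch, qPoch, qPoch, ← prod_mul_distrib]
  exact prod_congr rfl fun i _ => by ring

/-- `1 / (x;x)_m`; extending it by `0` to negative `m` makes `qPochInv_mul_one_sub` hold for
all `m`, which removes every boundary case from the telescoping argument. -/
def qPochInv (x : K) (m : ℤ) : K := if m < 0 then 0 else (qPoch x x m.toNat)⁻¹

lemma qPochInv_natCast (x : K) (m : ℕ) : qPochInv x m = (qPoch x x m)⁻¹ := by
  simp [qPochInv]

lemma qPochInv_of_neg (x : K) {m : ℤ} (hm : m < 0) : qPochInv x m = 0 := if_pos hm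

lemma qPoch_toNat_mul_qPochInv {x : K} (hx : ¬IsOfFinOrder x) {m : ℤ} (hm : 0 ≤ m) :
    qPoch x x m.toNat * qPochInv x m = 1 := by
  lift m to ℕ using hm
  rw [Int.toNat_natCast, qPochInv_natCast, mul_inv_cancel₀ (qPoch_self_ne_zero hx m)]

lemma qPochInv_mul_one_sub {x : K} (hx : ¬IsOfFinOrder x) (m : ℤ) :
    qPochInv x m * (1 - x ^ m) = qPochInv x (m - 1) := by
  rcases lt_or_ge m 1 with hm | hm
  · rcases eq_or_lt_of_le (show m ≤ 0 by omega) with rfl | hm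
    · simp [qPochInv_of_neg]
    · simp [qPochInv_of_neg x hm, qPochInv_of_neg x (by omega : m - 1 < 0)]
  · obtain ⟨t, rfl⟩ : ∃ t : ℕ, m = t + 1 := ⟨m.toNat - 1, by omega⟩
    rw [add_sub_cancel_right, ← Nat.cast_succ, zpow_natCast, qPochInv_natCast, qPochInv_natCast,
      qPoch_succ, ← pow_succ', mul_inv, mul_assoc,
      inv_mul_cancel₀ (one_sub_pow_ne_zero hx t.succ_ne_zero), mul_one]

lemma qBinom_eq_mul_qPochInv (x : K) (n k : ℤ) :
    qBinom x n k = qPoch x x n.toNat * qPochInv x k * qPochInv x (n - k) := by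
  unfold qBinom
  split_ifs with h
  · rw [qPochInv, qPochInv, if_neg (by omega), if_neg (by omega), div_eq_mul_inv, mul_inv,
      mul_assoc]
  · rcases not_and_or.1 h with h | h
    · rw [qPochInv_of_neg x (by omega), mul_zero, zero_mul]
    · rw [qPochInv_of_neg x (show n - k < 0 by omega), mul_zero]

lemma qPoch_neg_mul_qPochInv_sq {x : K} (hx : ¬IsOfFinOrder x) (m : ℕ) :
    qPoch (-x) x m * qPochInv (x ^ 2) m = qPochInv x m := by
  have hsq : qPoch x x m * qPoch (-x) x m ≠ 0 := by
    rw [qPoch_mul_qPoch_neg]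
    exact qPoch_self_ne_zero (fun h => hx (h.of_pow two_ne_zero)) m
  rw [qPochInv_natCast, qPochInv_natCast, ← qPoch_mul_qPoch_neg, mul_inv, mul_comm (qPoch x x m)⁻¹,
    mul_inv_cancel_left₀ (right_ne_zero_of_mul hsq)]

lemma zpow_triangle {x : K} (hx : x ≠ 0) (m : ℤ) :
    x ^ (m * (m - 1) / 2) = x ^ ((m - 1) * (m - 1 - 1) / 2) * x ^ (m - 1) := by
  rw [← zpow_add₀ hx, ← Int.add_mul_ediv_right _ _ two_ne_zero]
  ring_nf

/-- The summand of the identity divided by `(x²;x²)_n` (see `pow_mul_qPoch_mul_qBinom_mul_qBinom`),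
using `(-x;x)_m / (x²;x²)_m = 1 / (x;x)_m`. -/
def summand (x : K) (n j k : ℤ) : K :=
  x ^ ((j - 2 * k) * (j - 2 * k - 1) / 2) * qPochInv x (j - 2 * k) *
    qPochInv (x ^ 2) k * qPochInv (x ^ 2) (n + k - j)

lemma summand_telescope {x : K} (hx0 : x ≠ 0) (hx : ¬IsOfFinOrder x) (n j k : ℤ) :
    (1 - x ^ j) * summand x n j k - (1 - x ^ (2 * n + 1 - j)) * summand x n (j - 1) k =
      (x ^ j - x ^ (j - 2 * (k + 1))) * summand x n j (k + 1) -
        (x ^ j - x ^ (j - 2 * k)) * summand x n j k := by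
  have hx2 : ¬IsOfFinOrder (x ^ 2) := fun h => hx (h.of_pow two_ne_zero)
  obtain ⟨m, rfl⟩ : ∃ m, j = m + 2 * k := ⟨j - 2 * k, by ring⟩
  obtain ⟨l, rfl⟩ : ∃ l, n = l + k + m := ⟨n - k - m, by ring⟩
  have hSk := qPochInv_mul_one_sub hx2 (k + 1)
  have hSl := qPochInv_mul_one_sub hx2 (l + 1)
  rw [add_sub_cancel_right] at hSk hSl
  have hsq (t : ℤ) : (x ^ 2) ^ t = x ^ t * x ^ t := by rw [sq, mul_zpow]
  simp only [summand]
  rw [show m + 2 * k - 2 * k = m by ring, show m + 2 * k - 1 - 2 * k = m - 1 by ring,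
    show m + 2 * k - 2 * (k + 1) = m - 1 - 1 by ring, show l + k + m + k - (m + 2 * k) = l by ring,
    show l + k + m + k - (m + 2 * k - 1) = l + 1 by ring,
    show l + k + m + (k + 1) - (m + 2 * k) = l + 1 by ring, ← hSk, ← hSl,
    ← qPochInv_mul_one_sub hx (m - 1), ← qPochInv_mul_one_sub hx m,
    zpow_triangle hx0 m, zpow_triangle hx0 (m - 1),
    show 2 * (l + k + m) + 1 - (m + 2 * k) = m + (l + l) + 1 by ring, two_mul]
  generalize x ^ ((m - 1 - 1) * (m - 1 - 1 - 1) / 2) = W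
  simp only [hsq, zpow_add₀ hx0, zpow_sub₀ hx0, zpow_one]
  field_simp
  ring

lemma summand_eq_zero_of_lt (x : K) (n : ℤ) {j k : ℤ} (h : j < 2 * k) : summand x n j k = 0 := by
  rw [summand, qPochInv_of_neg x (by omega : j - 2 * k < 0), mul_zero, zero_mul, zero_mul]

lemma sum_range_summand_of_lt (x : K) (n : ℤ) (j : ℕ) {N : ℕ} (hN : j / 2 < N) :
    ∑ k ∈ range N, summand x n j k = ∑ k ∈ range (j / 2 + 1), summand x n j k :=
  (sum_subset (range_subset_range.2 hN) fun k hk hk' =>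
    summand_eq_zero_of_lt x n (by simp only [mem_range] at hk hk'; omega)).symm

lemma sum_summand_succ {x : K} (hx0 : x ≠ 0) (hx : ¬IsOfFinOrder x) (n : ℤ) (j : ℕ) :
    (1 - x ^ (j + 1)) * ∑ k ∈ range ((j + 1) / 2 + 1), summand x n ↑(j + 1) k =
      (1 - x ^ (2 * n - j)) * ∑ k ∈ range (j / 2 + 1), summand x n j k := by
  set N := (j + 1) / 2 + 1
  have htel := sum_range_sub (fun k : ℕ => (x ^ ((j : ℤ) + 1) - x ^ ((j : ℤ) + 1 - 2 * k)) *
    summand x n (j + 1) k) N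
  simp only [Nat.cast_add_one, Nat.cast_zero, mul_zero, sub_zero, sub_self, zero_mul,
    summand_eq_zero_of_lt x n (show (j : ℤ) + 1 < 2 * (N : ℕ) by omega),
    ← summand_telescope hx0 hx, add_sub_cancel_right, sum_sub_distrib, ← mul_sum,
    add_sub_add_right_eq_sub] at htel
  rw [← sum_range_summand_of_lt x n j (by omega : j / 2 < N), ← sub_eq_zero]
  exact_mod_cast htel

lemma qPochInv_mul_qPochInv_succ {x : K} (hx : ¬IsOfFinOrder x) (N j : ℤ) :
    (1 - x ^ (j + 1)) * (qPochInv x (j + 1) * qPochInv x (N - (j + 1))) =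
      (1 - x ^ (N - j)) * (qPochInv x j * qPochInv x (N - j)) := by
  have h₁ := qPochInv_mul_one_sub hx (j + 1)
  have h₂ := qPochInv_mul_one_sub hx (N - j)
  rw [add_sub_cancel_right] at h₁
  rw [sub_sub] at h₂
  linear_combination qPochInv x (N - (j + 1)) * h₁ - qPochInv x j * h₂

theorem qPoch_mul_sum_summand {x : K} (hx0 : x ≠ 0) (hx : ¬IsOfFinOrder x) (n j : ℕ) :
    qPoch (x ^ 2) (x ^ 2) n * ∑ k ∈ range (j / 2 + 1), summand x n j k =
      qPoch x x (2 * n) * (qPochInv x j * qPochInv x (2 * n - j)) := by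
  have hx2 : ¬IsOfFinOrder (x ^ 2) := fun h => hx (h.of_pow two_ne_zero)
  induction j with
  | zero =>
    have h₁ := qPoch_toNat_mul_qPochInv hx2 (Int.natCast_nonneg n)
    have h₂ := qPoch_toNat_mul_qPochInv hx (Int.natCast_nonneg (2 * n))
    rw [Int.toNat_natCast, Nat.cast_mul, Nat.cast_two] at h₂
    have h₀ (y : K) : qPochInv y 0 = 1 := by simp [qPochInv, qPoch]
    simp_all [summand]
  | succ j ih =>
    refine mul_left_cancel₀ (one_sub_pow_ne_zero hx (i := j + 1) j.succ_ne_zero) ?_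
    have hsucc := sum_summand_succ hx0 hx n j
    have hrhs := qPochInv_mul_qPochInv_succ hx (2 * n) j
    rw [← Nat.cast_add_one, zpow_natCast] at hrhs
    linear_combination qPoch (x ^ 2) (x ^ 2) n * hsucc + (1 - x ^ (2 * (n : ℤ) - j)) * ih -
      qPoch x x (2 * n) * hrhs

lemma natCast_choose_two (m : ℕ) : ((m.choose 2 : ℕ) : ℤ) = (m : ℤ) * (m - 1) / 2 := by
  induction m with
  | zero => rfl
  | succ m ih =>
    rw [Nat.choose_succ_succ', Nat.choose_one_right, Nat.cast_add, ih, Nat.cast_succ,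
      add_sub_cancel_right, add_comm, ← Int.add_mul_ediv_right _ _ two_ne_zero]
    ring_nf

lemma pow_mul_qPoch_mul_qBinom_mul_qBinom {x : K} (hx : ¬IsOfFinOrder x) (n : ℕ) {j k : ℕ}
    (hk : 2 * k ≤ j) :
    x ^ ((j - 2 * k).choose 2) * qPoch (-x) x (j - 2 * k) *
        qBinom (x ^ 2) ((n : ℤ) - k) ((j : ℤ) - 2 * k) * qBinom (x ^ 2) (n : ℤ) (k : ℤ) =
      qPoch (x ^ 2) (x ^ 2) n * summand x n j k := by
  have hx2 : ¬IsOfFinOrder (x ^ 2) := fun h => hx (h.of_pow two_ne_zero)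
  obtain ⟨m, rfl⟩ : ∃ m, j = 2 * k + m := ⟨j - 2 * k, by omega⟩
  have hm : ((2 * k + m : ℕ) : ℤ) - 2 * k = m := by push_cast; ring
  rw [Nat.add_sub_cancel_left, hm, qBinom_eq_mul_qPochInv, qBinom_eq_mul_qPochInv, summand, hm,
    ← zpow_natCast, natCast_choose_two, Int.toNat_natCast, ← qPoch_neg_mul_qPochInv_sq hx m,
    show (n : ℤ) - k - m = n + k - ((2 * k + m : ℕ) : ℤ) by push_cast; ring]
  rcases le_or_gt k n with hkn | hkn
  · have hnk := qPoch_toNat_mul_qPochInv hx2 (show 0 ≤ (n : ℤ) - k by omega)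
    linear_combination (x ^ ((m : ℤ) * (m - 1) / 2) * qPoch (-x) x m * qPochInv (x ^ 2) m *
      qPochInv (x ^ 2) (n + k - ((2 * k + m : ℕ) : ℤ)) * qPoch (x ^ 2) (x ^ 2) n *
      qPochInv (x ^ 2) k) * hnk
  · rw [qPochInv_of_neg _ (show (n : ℤ) + k - ((2 * k + m : ℕ) : ℤ) < 0 by omega),
      qPochInv_of_neg _ (show (n : ℤ) - k < 0 by omega)]
    ring

theorem stmt18 (n j : ℕ) :
    ∑ k ∈ Finset.range (j / 2 + 1),
      q ^ ((j - 2 * k).choose 2) * qPoch (-q) q (j - 2 * k) *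
        qBinom (q ^ 2) ((n : ℤ) - k) ((j : ℤ) - 2 * k) *
        qBinom (q ^ 2) (n : ℤ) (k : ℤ)
    = qBinom q (2 * n : ℤ) (j : ℤ) := by
  -- `(_)` lets the `Algebra ℚ` instance be the one of `RatFunc`, not `DivisionRing.toRatAlgebra`
  have hq : ¬IsOfFinOrder q :=
    @Transcendental.not_isOfFinOrder _ _ _ _ _ (_) _ RatFunc.transcendental_X
  rw [sum_congr rfl fun k hk =>
      pow_mul_qPoch_mul_qBinom_mul_qBinom hq n (by simp only [mem_range] at hk; omega),
    ← mul_sum, qPoch_mul_sum_summand RatFunc.X_ne_zero hq, qBinom_eq_mul_qPochInv, mul_assoc]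
  norm_cast

end
end
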